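/- The stationary distribution of the pot-size Markov chain M_1 satisfies π_2 ≥ 6/13, where π_j denotes the stationary probability of pot size j. -/

import Mathlib

/-- Transition probability of the pot-size Markov chain `M₁` (two players):
from pot size `x ≥ 1`, with probability 1/4 each the pot goes to `2` (Ganz,
followed by an ante-up), to `⌈x/2⌉` (Halb), stays at `x` (Nisht), or goes to
`x + 1` (Shtel). -/
noncomputable def potTrans (x y : ℕ) : ℝ :=
  (if y = 2 then (1 / 4 : ℝ) else 0) + (if y = (x + 1) / 2 then (1 / 4 : ℝ) else 0)
    + (if y = x then (1 / 4 : ℝ) else 0) + (if y = x + 1 then (1 / 4 : ℝ) else 0)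

/-- Any stationary distribution `π` of the pot-size chain (supported on pot
sizes `≥ 1`, satisfying the balance equations `π j = ∑ i, π i · P i j`)
satisfies `π 2 ≥ 6/13`. -/
theorem stationary_pot_two_bound (π : ℕ → ℝ)
    (hnonneg : ∀ j, 0 ≤ π j) (h0 : π 0 = 0)
    (hsummable : Summable π) (htotal : ∑' j, π j = 1)
    (hbalance : ∀ j, π j = ∑' i, π i * potTrans i j) :
    (6 / 13 : ℝ) ≤ π 2 := by
  -- balance at 1
  have e1 := hbalance 1
  have hz1 : ∀ i ∉ ({0,1,2} : Finset ℕ), π i * potTrans i 1 = 0 := by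
    intro i hi
    simp only [Finset.mem_insert, Finset.mem_singleton] at hi
    push_neg at hi
    obtain ⟨hi0, hi1, hi2⟩ := hi
    have h1 : ¬((1:ℕ) = 2) := by omega
    have h2 : ¬(1 = (i+1)/2) := by omega
    have h3 : ¬(1 = i) := by omega
    have h4 : ¬(1 = i+1) := by omega
    simp [potTrans, h1, h2, h3, h4, hi0]
  rw [tsum_eq_sum hz1] at e1
  norm_num [potTrans, h0] at e1
  -- balance at 3
  have e3 := hbalance 3
  have hz3 : ∀ i ∉ ({2,3,5,6} : Finset ℕ), π i * potTrans i 3 = 0 := by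
    intro i hi
    simp only [Finset.mem_insert, Finset.mem_singleton] at hi
    push_neg at hi
    obtain ⟨hi2, hi3, hi5, hi6⟩ := hi
    have h1 : ¬((3:ℕ) = 2) := by omega
    have h2 : ¬(3 = (i+1)/2) := by omega
    have h3 : ¬(3 = i) := by omega
    have h4 : ¬(3 = i+1) := by omega
    simp [potTrans, h1, h2, h3, h4]
  rw [tsum_eq_sum hz3] at e3
  norm_num [potTrans] at e3
  -- balance at 2
  have key : ∀ i, π i * potTrans i 2
      = π i * (1/4) + (if i ∈ ({1,2,3,4} : Finset ℕ) then π i * (1/4) else 0) := by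
    intro i
    match i with
    | 0 => simp [potTrans, h0]
    | 1 => norm_num [potTrans]; ring
    | 2 => norm_num [potTrans]; ring
    | 3 => norm_num [potTrans]; ring
    | 4 => norm_num [potTrans]; ring
    | (n+5) =>
      have h2 : ¬(2 = (n+5+1)/2) := by omega
      have h3 : ¬(2 = n+5) := by omega
      have h4 : ¬(2 = n+5+1) := by omega
      have h5 : n+5 ∉ ({1,2,3,4} : Finset ℕ) := by
        simp only [Finset.mem_insert, Finset.mem_singleton]; omega
      simp [potTrans, h2, h3, h4, h5]
  have hs1 : Summable (fun i => π i * (1/4 : ℝ)) := hsummable.mul_right _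
  have hs2 : Summable (fun i => if i ∈ ({1,2,3,4} : Finset ℕ) then π i * (1/4 : ℝ) else 0) :=
    summable_of_ne_finset_zero (s := ({1,2,3,4} : Finset ℕ)) (by intro b hb; simp [hb])
  have e2 := hbalance 2
  rw [tsum_congr key, Summable.tsum_add hs1 hs2, tsum_mul_right, htotal,
    tsum_eq_sum (s := ({1,2,3,4} : Finset ℕ)) (by intro b hb; simp [hb])] at e2
  norm_num at e2
  have n4 := hnonneg 4
  have n5 := hnonneg 5
  have n6 := hnonneg 6
  linarith
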